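/- Let R be a ring with identity such that APOG(R) ≠ ∅, and let I be a left or right ideal of R that is a vertex of APOG(R). Then R is a left and right Artinian ring if and only if adu(I) satisfies the descending chain condition both on its elements that are left ideals of R and on its elements that are right ideals of R. -/

import Mathlib

open scoped Pointwise

/-- `I` is a left ideal of the ring `R`: an additive subgroup with `R·I ⊆ I`. -/
def IsLeftIdeal (R : Type*) [Ring R] (I : AddSubgroup R) : Prop :=
  ∀ r : R, ∀ x ∈ I, r * x ∈ I

/-- `I` is a right ideal of the ring `R`: an additive subgroup with `I·R ⊆ I`. -/
def IsRightIdeal (R : Type*) [Ring R] (I : AddSubgroup R) : Prop :=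
  ∀ r : R, ∀ x ∈ I, x * r ∈ I

/-- `I` is a one-sided (left or right) ideal of `R`. -/
def IsOneSidedIdeal (R : Type*) [Ring R] (I : AddSubgroup R) : Prop :=
  IsLeftIdeal R I ∨ IsRightIdeal R I

/-- `IPO(R)`: the set of all products `I*J` of two one-sided ideals of `R`.
Here `I * J` is the additive subgroup generated by `{a*b : a ∈ I, b ∈ J}`
(the pointwise product of additive subgroups). -/
def IPO (R : Type*) [Ring R] : Set (AddSubgroup R) :=
  {A | ∃ I J : AddSubgroup R, IsOneSidedIdeal R I ∧ IsOneSidedIdeal R J ∧ A = I * J}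

/-- `A` is a vertex of `APOG(R) = Γ(IPO(R))`: a nonzero element of `IPO(R)` that is a
one-sided zero-divisor of the semigroup `IPO(R)`. -/
def APOGVertex (R : Type*) [Ring R] (A : AddSubgroup R) : Prop :=
  A ∈ IPO R ∧ A ≠ ⊥ ∧ ∃ B ∈ IPO R, B ≠ ⊥ ∧ (A * B = ⊥ ∨ B * A = ⊥)

/-- The directed edge `A → B` of `APOG(R)`: both are vertices, `A ≠ B` and `A*B = 0`. -/
def APOGEdge (R : Type*) [Ring R] (A B : AddSubgroup R) : Prop :=
  APOGVertex R A ∧ APOGVertex R B ∧ A ≠ B ∧ A * B = ⊥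

/-- `A ⇌ B`: `A ≠ B` and `A*B = 0` or `B*A = 0`. -/
def APOGAdj (R : Type*) [Ring R] (A B : AddSubgroup R) : Prop :=
  A ≠ B ∧ (A * B = ⊥ ∨ B * A = ⊥)

/-- `ad(C)`: the vertices `A` with `A = C`, or `C ⇌ A`, or `C ⇌ B ⇌ A` for some vertex `B`. -/
def ad (R : Type*) [Ring R] (C : AddSubgroup R) : Set (AddSubgroup R) :=
  {A | APOGVertex R A ∧ (A = C ∨ APOGAdj R C A ∨
    ∃ B, APOGVertex R B ∧ APOGAdj R C B ∧ APOGAdj R B A)}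

/-- `adu(D) = ⋃ { ad(C) : C a vertex of APOG(R) with C ⊆ D }`. -/
def adu (R : Type*) [Ring R] (D : AddSubgroup R) : Set (AddSubgroup R) :=
  {A | ∃ C : AddSubgroup R, APOGVertex R C ∧ C ≤ D ∧ A ∈ ad R C}

/-- A family `T` of additive subgroups satisfies the descending chain condition. -/
def DCCOn (R : Type*) [Ring R] (T : Set (AddSubgroup R)) : Prop :=
  ∀ f : ℕ → AddSubgroup R, (∀ n, f n ∈ T) → (∀ n, f (n + 1) ≤ f n) →
    ∃ N, ∀ n, N ≤ n → f n = f N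

/-- A family `T` of additive subgroups satisfies the ascending chain condition. -/
def ACCOn (R : Type*) [Ring R] (T : Set (AddSubgroup R)) : Prop :=
  ∀ f : ℕ → AddSubgroup R, (∀ n, f n ∈ T) → (∀ n, f n ≤ f (n + 1)) →
    ∃ N, ∀ n, N ≤ n → f n = f N

/-!
Only the reverse implication needs work, and passing to `Rᵐᵒᵖ`, which swaps left and right
ideals and reverses products (hence preserves `adu`), reduces it to left ideals. The vertex `I`
yields a nonzero `b` such that for every left ideal `J` both `J b` and `J ∩ l.ann(b)` are zero
or lie in `adu(I)`: each has zero product with `I` or with `b R`, and `b R` is, or has zero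
product with, a nonzero member of `IPO(R)` inside `I`. A descending chain of left ideals
then stabilises because `Jₙ b` and `Jₙ ∩ l.ann(b)` do, and for `J' ⊆ J` the equalities
`J' b = J b` and `J' ∩ l.ann(b) = J ∩ l.ann(b)` force `J' = J`.
-/

namespace AddSubgroup

theorem eq_of_le_of_map_eq_of_inf_ker_eq {G N : Type*} [AddCommGroup G] [AddGroup N]
    (f : G →+ N) {H K : AddSubgroup G} (hle : H ≤ K) (hmap : H.map f = K.map f)
    (hker : H ⊓ f.ker = K ⊓ f.ker) : H = K :=
  eq_of_le_of_inf_le_of_sup_le hle hker.ge (map_eq_map_iff.1 hmap).ge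

variable {R : Type*} [NonUnitalNonAssocRing R] {A B C : AddSubgroup R}

theorem mul_mem_mul {a b : R} (ha : a ∈ A) (hb : b ∈ B) : a * b ∈ A * B :=
  AddSubmonoid.mul_mem_mul ha hb

theorem mul_le : A * B ≤ C ↔ ∀ a ∈ A, ∀ b ∈ B, a * b ∈ C :=
  AddSubmonoid.mul_le (P := C.toAddSubmonoid)

theorem mul_eq_bot_iff : A * B = ⊥ ↔ ∀ a ∈ A, ∀ b ∈ B, a * b = 0 := by
  simp only [← le_bot_iff, mul_le, mem_bot]

end AddSubgroup

section

open AddSubgroup AddMonoidHom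

variable {R : Type*} [Ring R]

section Chains

theorem DCCOn.mono {S T : Set (AddSubgroup R)} (hT : DCCOn R T) (hST : S ⊆ T) : DCCOn R S :=
  fun f hf => hT f fun n => hST (hf n)

theorem DCCOn.insert_bot {T : Set (AddSubgroup R)} (hT : DCCOn R T) : DCCOn R (insert ⊥ T) := by
  intro f hf hdesc
  by_cases h : ∃ n, f n = ⊥
  · obtain ⟨n₀, h₀⟩ := h
    refine ⟨n₀, fun n hn => ?_⟩
    rw [h₀, ← le_bot_iff, ← h₀]
    exact antitone_nat_of_succ_le hdesc hn
  · push Not at h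
    exact hT f (fun n => (hf n).resolve_left (h n)) hdesc

theorem DCCOn.of_map_of_inf_ker {S T : Set (AddSubgroup R)} (hT : DCCOn R T) (f : R →+ R)
    (hmap : ∀ J ∈ S, J.map f ∈ T) (hker : ∀ J ∈ S, J ⊓ f.ker ∈ T) : DCCOn R S := by
  intro g hg hdesc
  obtain ⟨N₁, hN₁⟩ := hT (fun n => (g n).map f) (fun n => hmap _ (hg n))
    (fun n => map_mono (hdesc n))
  obtain ⟨N₂, hN₂⟩ := hT (fun n => g n ⊓ f.ker) (fun n => hker _ (hg n))
    (fun n => inf_le_inf_right _ (hdesc n))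
  refine ⟨max N₁ N₂, fun n hn => ?_⟩
  have hn₁ : N₁ ≤ n := le_of_max_le_left hn
  have hn₂ : N₂ ≤ n := le_of_max_le_right hn
  refine eq_of_le_of_map_eq_of_inf_ker_eq f (antitone_nat_of_succ_le hdesc hn) ?_ ?_
  · exact (hN₁ n hn₁).trans (hN₁ _ (le_max_left _ _)).symm
  · exact (hN₂ n hn₂).trans (hN₂ _ (le_max_right _ _)).symm

theorem DCCOn.preimage {S : Type*} [Ring S] {T : Set (AddSubgroup S)} (hT : DCCOn S T)
    (e : AddSubgroup R ≃o AddSubgroup S) : DCCOn R (e ⁻¹' T) := by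
  intro f hf hdesc
  obtain ⟨N, hN⟩ := hT (e ∘ f) hf (fun n => e.monotone (hdesc n))
  exact ⟨N, fun n hn => e.injective (hN n hn)⟩

end Chains

section Ideals

variable {J K : AddSubgroup R}

theorem isLeftIdeal_top : IsLeftIdeal R ⊤ := fun _ _ _ => mem_top _

theorem IsLeftIdeal.mem_IPO (hJ : IsLeftIdeal R J) : J ∈ IPO R := by
  refine ⟨⊤, J, .inl isLeftIdeal_top, .inl hJ, le_antisymm (fun x hx => ?_) ?_⟩
  · simpa using mul_mem_mul (mem_top 1) hx
  · exact mul_le.2 fun r _ x hx => hJ r x hx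

theorem IsRightIdeal.mem_IPO (hJ : IsRightIdeal R J) : J ∈ IPO R := by
  refine ⟨J, ⊤, .inr hJ, .inl isLeftIdeal_top, le_antisymm (fun x hx => ?_) ?_⟩
  · simpa using mul_mem_mul hx (mem_top 1)
  · exact mul_le.2 fun x hx r _ => hJ r x hx

theorem IsLeftIdeal.inf (hJ : IsLeftIdeal R J) (hK : IsLeftIdeal R K) : IsLeftIdeal R (J ⊓ K) :=
  fun r _ hx => ⟨hJ r _ hx.1, hK r _ hx.2⟩

theorem IsLeftIdeal.map_mulRight (hJ : IsLeftIdeal R J) (b : R) :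
    IsLeftIdeal R (J.map (mulRight b)) := by
  rintro r _ ⟨x, hx, rfl⟩
  exact ⟨r * x, hJ r x hx, mul_assoc r x b⟩

theorem isLeftIdeal_ker_mulRight (b : R) : IsLeftIdeal R (mulRight b).ker := by
  intro r x (hx : x * b = 0)
  show r * x * b = 0
  rw [mul_assoc, hx, mul_zero]

theorem isRightIdeal_range_mulLeft (b : R) : IsRightIdeal R (mulLeft b).range := by
  rintro r _ ⟨x, rfl⟩
  exact ⟨x * r, (mul_assoc b x r).symm⟩

theorem range_mulLeft_ne_bot {b : R} (hb : b ≠ 0) : (mulLeft b).range ≠ ⊥ :=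
  ne_bot_iff_exists_ne_zero.2 ⟨⟨b, 1, mul_one b⟩, fun h => hb (congrArg Subtype.val h)⟩

end Ideals

section Graph

variable {A B C I K X : AddSubgroup R}

theorem mem_ad_of_mul_eq_bot (hA : APOGVertex R A) (h : C * A = ⊥ ∨ A * C = ⊥) :
    A ∈ ad R C := by
  by_cases hAC : A = C
  · exact ⟨hA, .inl hAC⟩
  · exact ⟨hA, .inr (.inl ⟨Ne.symm hAC, h⟩)⟩

theorem mem_ad_of_mul_eq_bot_of_mul_eq_bot (hA : APOGVertex R A) (hB : APOGVertex R B)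
    (hCB : C * B = ⊥ ∨ B * C = ⊥) (hBA : B * A = ⊥ ∨ A * B = ⊥) : A ∈ ad R C := by
  by_cases hC : C = B
  · exact mem_ad_of_mul_eq_bot hA (hC ▸ hBA)
  by_cases hB' : B = A
  · exact mem_ad_of_mul_eq_bot hA (hB' ▸ hCB)
  exact ⟨hA, .inr (.inr ⟨B, hB, ⟨hC, hCB⟩, ⟨hB', hBA⟩⟩)⟩

def NearBelow (I X : AddSubgroup R) : Prop :=
  ∃ C ≤ I, C ∈ IPO R ∧ C ≠ ⊥ ∧ (C = X ∨ C * X = ⊥ ∨ X * C = ⊥)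

theorem APOGVertex.nearBelow_self (hI : APOGVertex R I) : NearBelow I I :=
  ⟨I, le_rfl, hI.1, hI.2.1, .inl rfl⟩

theorem NearBelow.mem_adu (hXI : NearBelow I X) (hX : X ∈ IPO R) (hX0 : X ≠ ⊥)
    (hK : K ∈ IPO R) (hK0 : K ≠ ⊥) (hXK : X * K = ⊥ ∨ K * X = ⊥) : K ∈ adu R I := by
  obtain ⟨C, hCI, hC, hC0, hCX⟩ := hXI
  have hKv : APOGVertex R K := ⟨hK, hK0, X, hX, hX0, hXK.symm⟩
  rcases hCX with rfl | hCX
  · exact ⟨C, ⟨hC, hC0, K, hK, hK0, hXK⟩, hCI, mem_ad_of_mul_eq_bot hKv hXK⟩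
  · exact ⟨C, ⟨hC, hC0, X, hX, hX0, hCX⟩, hCI,
      mem_ad_of_mul_eq_bot_of_mul_eq_bot hKv ⟨hX, hX0, C, hC, hC0, hCX.symm⟩ hCX hXK⟩

end Graph

section LeftChains

variable {I J : AddSubgroup R} {b : R}

/-- Right multiplication by `b` splits every left ideal `J` into `J b` and `J ∩ ann(b)`,
each of which is zero or lies in `adu(I)`. -/
def LeftWitness (I : AddSubgroup R) (b : R) : Prop :=
  b ≠ 0 ∧ ((∀ x ∈ I, b * x = 0) ∨ b * b = 0) ∧ NearBelow I (mulLeft b).range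

theorem LeftWitness.map_mem_adu (hI : APOGVertex R I) (hb : LeftWitness I b)
    (hJ : IsLeftIdeal R J) (h0 : J.map (mulRight b) ≠ ⊥) : J.map (mulRight b) ∈ adu R I := by
  obtain ⟨hb0, hbI | hbb, hnear⟩ := hb
  · refine hI.nearBelow_self.mem_adu hI.1 hI.2.1 (hJ.map_mulRight b).mem_IPO h0
      (.inr (mul_eq_bot_iff.2 ?_))
    rintro _ ⟨j, -, rfl⟩ x hx
    show j * b * x = 0
    rw [mul_assoc, hbI x hx, mul_zero]
  · refine hnear.mem_adu (isRightIdeal_range_mulLeft b).mem_IPO (range_mulLeft_ne_bot hb0)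
      (hJ.map_mulRight b).mem_IPO h0 (.inr (mul_eq_bot_iff.2 ?_))
    rintro _ ⟨j, -, rfl⟩ _ ⟨r, rfl⟩
    show j * b * (b * r) = 0
    rw [mul_assoc, ← mul_assoc b, hbb, zero_mul, mul_zero]

theorem LeftWitness.inf_ker_mem_adu (hb : LeftWitness I b) (hJ : IsLeftIdeal R J)
    (h0 : J ⊓ (mulRight b).ker ≠ ⊥) : J ⊓ (mulRight b).ker ∈ adu R I := by
  refine hb.2.2.mem_adu (isRightIdeal_range_mulLeft b).mem_IPO (range_mulLeft_ne_bot hb.1)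
    (hJ.inf (isLeftIdeal_ker_mulRight b)).mem_IPO h0 (.inr (mul_eq_bot_iff.2 ?_))
  rintro k ⟨-, hk : k * b = 0⟩ _ ⟨r, rfl⟩
  show k * (b * r) = 0
  rw [← mul_assoc, hk, zero_mul]

theorem LeftWitness.dccOn (hI : APOGVertex R I) (hb : LeftWitness I b)
    (hdcc : DCCOn R (adu R I ∩ {J | IsLeftIdeal R J})) : DCCOn R {J | IsLeftIdeal R J} :=
  hdcc.insert_bot.of_map_of_inf_ker (mulRight b)
    (fun _ hJ => or_iff_not_imp_left.2 fun h0 =>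
      ⟨hb.map_mem_adu hI hJ h0, hJ.map_mulRight b⟩)
    (fun _ hJ => or_iff_not_imp_left.2 fun h0 =>
      ⟨hb.inf_ker_mem_adu hJ h0, hJ.inf (isLeftIdeal_ker_mulRight b)⟩)

theorem exists_leftWitness_of_mul_right_eq_zero (hI : APOGVertex R I) (hb0 : b ≠ 0)
    (hIb : ∀ x ∈ I, x * b = 0) : ∃ u, LeftWitness I u := by
  by_cases hbI : ∀ x ∈ I, b * x = 0
  · refine ⟨b, hb0, .inl hbI, I, le_rfl, hI.1, hI.2.1, .inr (.inl (mul_eq_bot_iff.2 ?_))⟩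
    rintro x hx _ ⟨r, rfl⟩
    show x * (b * r) = 0
    rw [← mul_assoc, hIb x hx, zero_mul]
  push Not at hbI
  obtain ⟨x, hx, hbx⟩ := hbI
  -- `u = b x` has `u u = b (x b) x = 0` and `I u = (I b) x = 0`
  refine ⟨b * x, hbx, .inr ?_, I, le_rfl, hI.1, hI.2.1, .inr (.inl (mul_eq_bot_iff.2 ?_))⟩
  · rw [mul_assoc, ← mul_assoc x, hIb x hx, zero_mul, mul_zero]
  · rintro y hy _ ⟨r, rfl⟩
    show y * (b * x * r) = 0
    rw [← mul_assoc, ← mul_assoc, hIb y hy, zero_mul, zero_mul]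

theorem exists_leftWitness_of_mul_left_eq_zero (hI : IsOneSidedIdeal R I)
    (hIv : APOGVertex R I) (hb0 : b ≠ 0) (hbI : ∀ x ∈ I, b * x = 0) :
    ∃ u, LeftWitness I u := by
  rcases hI with hIl | hIr
  · refine ⟨b, hb0, .inl hbI, I, le_rfl, hIv.1, hIv.2.1, .inr (.inr (mul_eq_bot_iff.2 ?_))⟩
    rintro _ ⟨r, rfl⟩ x hx
    show b * r * x = 0
    rw [mul_assoc, hbI _ (hIl r x hx)]
  by_cases hIb : ∀ x ∈ I, x * b = 0
  · exact exists_leftWitness_of_mul_right_eq_zero hIv hb0 hIb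
  push Not at hIb
  obtain ⟨x, hx, hxb⟩ := hIb
  -- `u = x b` has `u I = x (b I) = 0`, and `u R ⊆ I` as `I` is a right ideal
  refine ⟨x * b, hxb, .inl fun y hy => ?_, (mulLeft (x * b)).range, ?_,
    (isRightIdeal_range_mulLeft _).mem_IPO, range_mulLeft_ne_bot hxb, .inl rfl⟩
  · rw [mul_assoc, hbI y hy, mul_zero]
  · rintro _ ⟨r, rfl⟩
    exact hIr r _ (hIr b x hx)

theorem APOGVertex.exists_leftWitness (hI : IsOneSidedIdeal R I) (hIv : APOGVertex R I) :
    ∃ b, LeftWitness I b := by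
  obtain ⟨B, -, hB0, hIB | hBI⟩ := hIv.2.2
  all_goals obtain ⟨b, hb, hb0⟩ := B.bot_or_exists_ne_zero.resolve_left hB0
  · exact exists_leftWitness_of_mul_right_eq_zero hIv hb0
      fun x hx => mul_eq_bot_iff.1 hIB x hx b hb
  · exact exists_leftWitness_of_mul_left_eq_zero hI hIv hb0
      fun x hx => mul_eq_bot_iff.1 hBI b hb x hx

theorem dccOn_isLeftIdeal_of_adu {I : AddSubgroup R} (hI : IsOneSidedIdeal R I)
    (hIv : APOGVertex R I) (hdcc : DCCOn R (adu R I ∩ {J | IsLeftIdeal R J})) :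
    DCCOn R {J | IsLeftIdeal R J} := by
  obtain ⟨b, hb⟩ := hIv.exists_leftWitness hI
  exact hb.dccOn hIv hdcc

end LeftChains

section Opposite

open MulOpposite

variable {A B C D I : AddSubgroup R}

def opIso : AddSubgroup R ≃o AddSubgroup Rᵐᵒᵖ :=
  (opAddEquiv : R ≃+ Rᵐᵒᵖ).symm.comapAddSubgroup

theorem mem_opIso {x : Rᵐᵒᵖ} : x ∈ opIso A ↔ x.unop ∈ A := Iff.rfl

theorem opIso_eq_bot_iff : opIso A = ⊥ ↔ A = ⊥ := by
  rw [← opIso.map_bot, opIso.injective.eq_iff]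

theorem opIso_mul (A B : AddSubgroup R) : opIso (A * B) = opIso B * opIso A := by
  refine le_antisymm (fun x hx => ?_) (mul_le.2 fun y hy z hz => mul_mem_mul hz hy)
  rw [← op_unop x]
  exact AddSubmonoid.mul_induction_on (mem_opIso.1 hx)
    (fun a ha b hb => mul_mem_mul (mem_opIso.2 hb) (mem_opIso.2 ha))
    (fun _ _ => add_mem)

theorem isLeftIdeal_opIso_iff : IsLeftIdeal Rᵐᵒᵖ (opIso A) ↔ IsRightIdeal R A :=
  ⟨fun h r x hx => h (op r) (op x) hx, fun h r x hx => h r.unop x.unop hx⟩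

theorem isRightIdeal_opIso_iff : IsRightIdeal Rᵐᵒᵖ (opIso A) ↔ IsLeftIdeal R A :=
  ⟨fun h r x hx => h (op r) (op x) hx, fun h r x hx => h r.unop x.unop hx⟩

theorem isOneSidedIdeal_opIso_iff : IsOneSidedIdeal Rᵐᵒᵖ (opIso A) ↔ IsOneSidedIdeal R A := by
  rw [IsOneSidedIdeal, IsOneSidedIdeal, isLeftIdeal_opIso_iff, isRightIdeal_opIso_iff, or_comm]

theorem opIso_mem_IPO_iff : opIso A ∈ IPO Rᵐᵒᵖ ↔ A ∈ IPO R := by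
  simp only [IPO, Set.mem_ofPred_eq, opIso.surjective.exists, isOneSidedIdeal_opIso_iff,
    ← opIso_mul, opIso.injective.eq_iff]
  exact ⟨fun ⟨I, J, hI, hJ, h⟩ => ⟨J, I, hJ, hI, h⟩, fun ⟨I, J, hI, hJ, h⟩ => ⟨J, I, hJ, hI, h⟩⟩

theorem apogVertex_opIso_iff : APOGVertex Rᵐᵒᵖ (opIso A) ↔ APOGVertex R A := by
  simp only [APOGVertex, opIso.surjective.exists, opIso_mem_IPO_iff, ← opIso_mul,
    opIso_eq_bot_iff, ne_eq, or_comm]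

theorem apogAdj_opIso_iff : APOGAdj Rᵐᵒᵖ (opIso A) (opIso B) ↔ APOGAdj R A B := by
  simp only [APOGAdj, ← opIso_mul, opIso_eq_bot_iff, opIso.injective.ne_iff, or_comm]

theorem opIso_mem_ad_iff : opIso A ∈ ad Rᵐᵒᵖ (opIso C) ↔ A ∈ ad R C := by
  simp only [ad, Set.mem_ofPred_eq, opIso.surjective.exists, apogVertex_opIso_iff,
    apogAdj_opIso_iff, opIso.injective.eq_iff]

theorem opIso_mem_adu_iff : opIso A ∈ adu Rᵐᵒᵖ (opIso D) ↔ A ∈ adu R D := by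
  simp only [adu, Set.mem_ofPred_eq, opIso.surjective.exists, apogVertex_opIso_iff,
    opIso.le_iff_le, opIso_mem_ad_iff]

theorem dccOn_isRightIdeal_of_adu (hI : IsOneSidedIdeal R I) (hIv : APOGVertex R I)
    (hdcc : DCCOn R (adu R I ∩ {J | IsRightIdeal R J})) : DCCOn R {J | IsRightIdeal R J} := by
  have hdcc' : DCCOn Rᵐᵒᵖ (adu Rᵐᵒᵖ (opIso I) ∩ {J | IsLeftIdeal Rᵐᵒᵖ J}) := by
    convert hdcc.preimage (opIso (R := R)).symm using 1
    ext J
    rw [← opIso.apply_symm_apply J]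
    simp only [Set.mem_inter_iff, Set.mem_ofPred_eq, Set.mem_preimage, opIso.symm_apply_apply,
      opIso_mem_adu_iff, isLeftIdeal_opIso_iff]
  convert (dccOn_isLeftIdeal_of_adu (isOneSidedIdeal_opIso_iff.2 hI)
    (apogVertex_opIso_iff.2 hIv) hdcc').preimage opIso using 1
  ext J
  exact isLeftIdeal_opIso_iff.symm

end Opposite

end

theorem artinian_iff_adu_dcc_general (R : Type*) [Ring R]
    (I : AddSubgroup R) (hI : IsOneSidedIdeal R I) (hIv : APOGVertex R I) :
    (DCCOn R {J | IsLeftIdeal R J} ∧ DCCOn R {J | IsRightIdeal R J}) ↔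
      (DCCOn R (adu R I ∩ {J | IsLeftIdeal R J}) ∧
        DCCOn R (adu R I ∩ {J | IsRightIdeal R J})) :=
  ⟨fun ⟨hl, hr⟩ => ⟨hl.mono Set.inter_subset_right, hr.mono Set.inter_subset_right⟩,
    fun ⟨hl, hr⟩ => ⟨dccOn_isLeftIdeal_of_adu hI hIv hl, dccOn_isRightIdeal_of_adu hI hIv hr⟩⟩

/-- Suppose `APOG(R) ≠ ∅` and `I` is a one-sided ideal of `R` which is a
vertex of `APOG(R)`.  Then `R` is left and right Artinian iff `adu(I)` has DCC both on
its members that are left ideals and on its members that are right ideals. -/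
theorem artinian_iff_adu_dcc (R : Type*) [Ring R]
    (hne : ∃ A : AddSubgroup R, APOGVertex R A)
    (I : AddSubgroup R) (hI : IsOneSidedIdeal R I) (hIv : APOGVertex R I) :
    (DCCOn R {J | IsLeftIdeal R J} ∧ DCCOn R {J | IsRightIdeal R J}) ↔
      (DCCOn R (adu R I ∩ {J | IsLeftIdeal R J}) ∧
        DCCOn R (adu R I ∩ {J | IsRightIdeal R J})) :=
  artinian_iff_adu_dcc_general R I hI hIv
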